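/- arXiv:2510.24732 — 2 statements merged into one kernel-verified Lean document; each statement's English description precedes it below -/
import Mathlib

section
/- Let X_0, X_1 : Ω → ℝ^d be integrable random vectors on a probability space (Ω, F, P), and for t ∈ [0,1] set X_t = (1−t)·X_0 + t·X_1. Let u : ℝ^d × [0,1] → ℝ^d be a jointly measurable function such that for every t ∈ [0,1], u(X_t, t) = E[X_1 − X_0 ∣ σ(X_t)] almost surely (i.e. u is the rectified velocity field of the coupling (X_0, X_1)). Let Z : Ω × [0,1] → ℝ^d be a stochastic process such that: (i) almost surely, the sample path t ↦ Z_t is continuously differentiable on [0,1] with derivative dZ_t/dt = u(Z_t, t) for every t ∈ [0,1]; (ii) the function (t, ω) ↦ ‖u(Z_t(ω), t)‖ is integrable on [0,1] × Ω with respect to the product of Lebesgue measure and P; and (iii) Z_t has the same law as X_t for every t ∈ [0,1]. Then E[‖Z_1 − Z_0‖] ≤ E[‖X_1 − X_0‖], i.e. the coupling (Z_0, Z_1) induced by the rectified flow has transport cost no larger than that of the original coupling (X_0, X_1). -/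
open MeasureTheory

/-- L¹ contraction property of conditional expectation (vector-valued):
`∫ ‖E[f|m]‖ ≤ ∫ ‖f‖`. -/
lemma my_integral_norm_condexp_le {α F : Type*} [NormedAddCommGroup F] [NormedSpace ℝ F]
    [CompleteSpace F] {m m0 : MeasurableSpace α} {μ : Measure α} [IsFiniteMeasure μ]
    {f : α → F} (hf : Integrable f μ) :
    ∫ x, ‖(μ[f|m]) x‖ ∂μ ≤ ∫ x, ‖f x‖ ∂μ := by
  by_cases hm : m ≤ m0
  · haveI : SigmaFinite (μ.trim hm) := inferInstance
    calc ∫ x, ‖(μ[f|m]) x‖ ∂μ = ‖condExpL1 hm μ f‖ := by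
          rw [L1.norm_eq_integral_norm]
          exact integral_congr_ae ((condExp_ae_eq_condExpL1 hm f).fun_comp norm)
      _ = ‖L1.setToL1 (dominatedFinMeasAdditive_condExpInd F hm μ) (hf.toL1 f)‖ := by
          rw [condExpL1_eq hf]; rfl
      _ ≤ 1 * ‖hf.toL1 f‖ := L1.norm_setToL1_le_mul_norm _ zero_le_one _
      _ = ∫ x, ‖f x‖ ∂μ := by rw [one_mul, L1.norm_of_fun_eq_integral_norm]
  · simp only [condExp_of_not_le hm, Pi.zero_apply, norm_zero, integral_zero]
    exact integral_nonneg fun x => norm_nonneg _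

/-- **Proposition 1 (Euclidean case): rectification reduces transport cost.**
If `u` is the rectified velocity field of the coupling `(X₀, X₁)` (i.e. for each
`t ∈ [0,1]`, `u (Xₜ, t)` is a version of `E[X₁ - X₀ | σ(Xₜ)]` where
`Xₜ = (1-t)•X₀ + t•X₁`), and `Z` is a process whose sample paths a.s. solve the ODE
`dZₜ/dt = u(Zₜ, t)` with continuous derivative on `[0,1]`, whose speed is integrable
on `[0,1] × Ω`, and whose marginals agree with those of `Xₜ` for every `t ∈ [0,1]`,
then `E‖Z₁ - Z₀‖ ≤ E‖X₁ - X₀‖`. -/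
theorem rectified_flow_reduces_transport_cost
    {d : ℕ} {Ω : Type*} [MeasurableSpace Ω] {μ : Measure Ω} [IsProbabilityMeasure μ]
    (X₀ X₁ : Ω → EuclideanSpace ℝ (Fin d))
    (hX₀ : Integrable X₀ μ) (hX₁ : Integrable X₁ μ)
    (X : ℝ → Ω → EuclideanSpace ℝ (Fin d))
    (hX : ∀ t, X t = fun ω => (1 - t) • X₀ ω + t • X₁ ω)
    (u : EuclideanSpace ℝ (Fin d) → ℝ → EuclideanSpace ℝ (Fin d))
    (hu_meas : Measurable (fun p : EuclideanSpace ℝ (Fin d) × ℝ => u p.1 p.2))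
    (hu_cond : ∀ t ∈ Set.Icc (0 : ℝ) 1,
      (fun ω => u (X t ω) t) =ᵐ[μ]
        μ[(fun ω => X₁ ω - X₀ ω) | MeasurableSpace.comap (X t) inferInstance])
    (Z : Ω → ℝ → EuclideanSpace ℝ (Fin d))
    (hZ_meas : ∀ t, Measurable (fun ω => Z ω t))
    (hZ_ode : ∀ᵐ ω ∂μ,
      (∀ t ∈ Set.Icc (0 : ℝ) 1,
        HasDerivWithinAt (Z ω) (u (Z ω t) t) (Set.Icc (0 : ℝ) 1) t) ∧
      ContinuousOn (fun t => u (Z ω t) t) (Set.Icc (0 : ℝ) 1))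
    (hZ_int : Integrable (fun p : ℝ × Ω => ‖u (Z p.2 p.1) p.1‖)
        ((volume.restrict (Set.Icc (0 : ℝ) 1)).prod μ))
    (hZ_law : ∀ t ∈ Set.Icc (0 : ℝ) 1,
        Measure.map (fun ω => Z ω t) μ = Measure.map (X t) μ) :
    ∫ ω, ‖Z ω 1 - Z ω 0‖ ∂μ ≤ ∫ ω, ‖X₁ ω - X₀ ω‖ ∂μ := by
  have hY : Integrable (fun ω => X₁ ω - X₀ ω) μ := hX₁.sub hX₀
  -- a.e. pointwise bound from the fundamental theorem of calculus
  have hptwise : ∀ᵐ ω ∂μ,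
      ‖Z ω 1 - Z ω 0‖ ≤ ∫ t in Set.Icc (0 : ℝ) 1, ‖u (Z ω t) t‖ := by
    filter_upwards [hZ_ode] with ω hω
    obtain ⟨hderiv, hcont⟩ := hω
    have hZcont : ContinuousOn (Z ω) (Set.Icc (0 : ℝ) 1) :=
      fun t ht => (hderiv t ht).continuousWithinAt
    have hint : IntervalIntegrable (fun t => u (Z ω t) t) volume 0 1 := by
      apply ContinuousOn.intervalIntegrable
      rwa [Set.uIcc_of_le zero_le_one]
    have hftc : ∫ t in (0 : ℝ)..1, u (Z ω t) t = Z ω 1 - Z ω 0 := by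
      apply intervalIntegral.integral_eq_sub_of_hasDeriv_right_of_le zero_le_one hZcont ?_ hint
      intro t ht
      exact ((hderiv t (Set.mem_Icc_of_Ioo ht)).hasDerivAt
        (Icc_mem_nhds ht.1 ht.2)).hasDerivWithinAt
    calc ‖Z ω 1 - Z ω 0‖ = ‖∫ t in (0 : ℝ)..1, u (Z ω t) t‖ := by rw [hftc]
      _ ≤ ∫ t in (0 : ℝ)..1, ‖u (Z ω t) t‖ :=
          intervalIntegral.norm_integral_le_integral_norm zero_le_one
      _ = ∫ t in Set.Icc (0 : ℝ) 1, ‖u (Z ω t) t‖ := by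
          rw [intervalIntegral.integral_of_le zero_le_one, integral_Icc_eq_integral_Ioc]
  -- integrability of the averaged speed
  have hg_int : Integrable (fun ω => ∫ t in Set.Icc (0 : ℝ) 1, ‖u (Z ω t) t‖) μ :=
    hZ_int.integral_prod_right
  -- Fubini and the conditional-expectation bound
  have key : ∫ ω, (∫ t in Set.Icc (0 : ℝ) 1, ‖u (Z ω t) t‖) ∂μ
      ≤ ∫ ω, ‖X₁ ω - X₀ ω‖ ∂μ := by
    have hswap := MeasureTheory.integral_integral_swap
      (f := fun (t : ℝ) (ω : Ω) => ‖u (Z ω t) t‖) hZ_int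
    rw [← hswap]
    have hbound : ∀ t ∈ Set.Icc (0 : ℝ) 1,
        ∫ ω, ‖u (Z ω t) t‖ ∂μ ≤ ∫ ω, ‖X₁ ω - X₀ ω‖ ∂μ := by
      intro t ht
      have hmeas_x : Measurable fun x : EuclideanSpace ℝ (Fin d) => u x t :=
        hu_meas.comp (measurable_id.prodMk measurable_const)
      have hXt_aem : AEMeasurable (X t) μ := by
        rw [hX t]
        exact (hX₀.aemeasurable.const_smul (1 - t)).add (hX₁.aemeasurable.const_smul t)
      have h1 : ∫ ω, ‖u (Z ω t) t‖ ∂μ = ∫ ω, ‖u (X t ω) t‖ ∂μ := by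
        rw [← integral_map (hZ_meas t).aemeasurable hmeas_x.norm.aestronglyMeasurable,
          hZ_law t ht, integral_map hXt_aem hmeas_x.norm.aestronglyMeasurable]
      have h2 : ∫ ω, ‖u (X t ω) t‖ ∂μ
          = ∫ ω, ‖(μ[(fun ω => X₁ ω - X₀ ω) |
              MeasurableSpace.comap (X t) inferInstance]) ω‖ ∂μ :=
        integral_congr_ae ((hu_cond t ht).fun_comp norm)
      rw [h1, h2]
      exact my_integral_norm_condexp_le hY
    have hint1 : IntegrableOn (fun t => ∫ ω, ‖u (Z ω t) t‖ ∂μ)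
        (Set.Icc (0 : ℝ) 1) volume := hZ_int.integral_prod_left
    calc ∫ t in Set.Icc (0 : ℝ) 1, (∫ ω, ‖u (Z ω t) t‖ ∂μ)
        ≤ ∫ _t in Set.Icc (0 : ℝ) 1, (∫ ω, ‖X₁ ω - X₀ ω‖ ∂μ) :=
          setIntegral_mono_on hint1 ((integrableOn_const_iff enorm_ne_top).mpr
            (Or.inr (by simp [Real.volume_Icc]))) measurableSet_Icc hbound
      _ = ∫ ω, ‖X₁ ω - X₀ ω‖ ∂μ := by simp [Real.volume_Icc]
  calc ∫ ω, ‖Z ω 1 - Z ω 0‖ ∂μ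
      ≤ ∫ ω, (∫ t in Set.Icc (0 : ℝ) 1, ‖u (Z ω t) t‖) ∂μ :=
        integral_mono_of_nonneg (Filter.Eventually.of_forall fun ω => norm_nonneg _)
          hg_int hptwise
    _ ≤ ∫ ω, ‖X₁ ω - X₀ ω‖ ∂μ := key
end

section
/- Let X_0, X_1 : Ω → ℝ^d be integrable random vectors on a probability space (Ω, F, P), and for t ∈ [0,1] set X_t = (1−t)·X_0 + t·X_1. Let u : ℝ^d × [0,1] → ℝ^d be a jointly measurable function such that for every t ∈ [0,1], u(X_t, t) = E[X_1 − X_0 ∣ σ(X_t)] almost surely, and assume the function (t, ω) ↦ ‖u(X_t(ω), t)‖ is integrable on [0,1] × Ω with respect to the product of Lebesgue measure and P. Then ∫_0^1 E[‖u(X_t, t)‖] dt ≤ E[‖X_1 − X_0‖]. -/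
open MeasureTheory

/-- Conditional expectation is an `L¹` contraction (vector-valued version):
`∫ ‖E[f|m]‖ ≤ ∫ ‖f‖`. -/
lemma integral_norm_condexp_le_aux {α E : Type*} [NormedAddCommGroup E] [NormedSpace ℝ E]
    [CompleteSpace E] {m0 : MeasurableSpace α} {μ : Measure α} [IsFiniteMeasure μ]
    (m : MeasurableSpace α) {f : α → E} (hf : Integrable f μ) :
    ∫ x, ‖(μ[f|m]) x‖ ∂μ ≤ ∫ x, ‖f x‖ ∂μ := by
  by_cases hm : m ≤ m0
  · haveI : SigmaFinite (μ.trim hm) := inferInstance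
    calc ∫ x, ‖(μ[f|m]) x‖ ∂μ = ∫ x, ‖condExpL1 hm μ f x‖ ∂μ :=
          integral_congr_ae ((condExp_ae_eq_condExpL1 hm f).mono fun x hx => by simp only [hx])
      _ = ‖condExpL1 hm μ f‖ := (L1.norm_eq_integral_norm _).symm
      _ = ‖condExpL1CLM E hm μ (hf.toL1 f)‖ := by rw [condExpL1_eq hf]
      _ ≤ ‖condExpL1CLM E hm μ‖ * ‖hf.toL1 f‖ := (condExpL1CLM E hm μ).le_opNorm _
      _ ≤ 1 * ‖hf.toL1 f‖ := by
          gcongr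
          exact L1.norm_setToL1_le (dominatedFinMeasAdditive_condExpInd E hm μ) zero_le_one
      _ = ‖hf.toL1 f‖ := one_mul _
      _ = ∫ x, ‖(hf.toL1 f : α → E) x‖ ∂μ := L1.norm_eq_integral_norm _
      _ = ∫ x, ‖f x‖ ∂μ :=
          integral_congr_ae ((hf.coeFn_toL1).mono fun x hx => by simp only [hx])
  · simp only [condExp_of_not_le hm, Pi.zero_apply, norm_zero, integral_zero]
    exact integral_nonneg fun x => norm_nonneg _

/-- **First half of the inequality chain for Proposition 1 (Euclidean case).**
If `u` is the rectified velocity field of the coupling `(X₀, X₁)` (i.e. for each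
`t ∈ [0,1]`, `u (Xₜ, t)` is a version of `E[X₁ - X₀ | σ(Xₜ)]` where
`Xₜ = (1-t)•X₀ + t•X₁`), and `(t, ω) ↦ ‖u (Xₜ(ω), t)‖` is integrable on `[0,1] × Ω`,
then `∫_0^1 E‖u(Xₜ, t)‖ dt ≤ E‖X₁ - X₀‖`. -/
theorem rectified_velocity_expected_speed_le_transport_cost
    {d : ℕ} {Ω : Type*} [MeasurableSpace Ω] {μ : Measure Ω} [IsProbabilityMeasure μ]
    (X₀ X₁ : Ω → EuclideanSpace ℝ (Fin d))
    (hX₀ : Integrable X₀ μ) (hX₁ : Integrable X₁ μ)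
    (X : ℝ → Ω → EuclideanSpace ℝ (Fin d))
    (hX : ∀ t, X t = fun ω => (1 - t) • X₀ ω + t • X₁ ω)
    (u : EuclideanSpace ℝ (Fin d) → ℝ → EuclideanSpace ℝ (Fin d))
    (hu_meas : Measurable (fun p : EuclideanSpace ℝ (Fin d) × ℝ => u p.1 p.2))
    (hu_cond : ∀ t ∈ Set.Icc (0 : ℝ) 1,
      (fun ω => u (X t ω) t) =ᵐ[μ]
        μ[(fun ω => X₁ ω - X₀ ω) | MeasurableSpace.comap (X t) inferInstance])
    (hu_int : Integrable (fun p : ℝ × Ω => ‖u (X p.1 p.2) p.1‖)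
        ((volume.restrict (Set.Icc (0 : ℝ) 1)).prod μ)) :
    ∫ t in Set.Icc (0 : ℝ) 1, ∫ ω, ‖u (X t ω) t‖ ∂μ ≤ ∫ ω, ‖X₁ ω - X₀ ω‖ ∂μ := by
  set C : ℝ := ∫ ω, ‖X₁ ω - X₀ ω‖ ∂μ with hC
  have hdiff : Integrable (fun ω => X₁ ω - X₀ ω) μ := hX₁.sub hX₀
  -- inner bound for each t ∈ [0,1]
  have hinner : ∀ t ∈ Set.Icc (0 : ℝ) 1, ∫ ω, ‖u (X t ω) t‖ ∂μ ≤ C := by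
    intro t ht
    have h1 : ∫ ω, ‖u (X t ω) t‖ ∂μ
        = ∫ ω, ‖(μ[(fun ω => X₁ ω - X₀ ω) |
            MeasurableSpace.comap (X t) inferInstance]) ω‖ ∂μ :=
      integral_congr_ae ((hu_cond t ht).fun_comp norm)
    rw [h1]
    exact integral_norm_condexp_le_aux (MeasurableSpace.comap (X t) inferInstance) hdiff
  -- integrability of the inner integral in t
  have hg : IntegrableOn (fun t => ∫ ω, ‖u (X t ω) t‖ ∂μ) (Set.Icc (0 : ℝ) 1) volume :=
    hu_int.integral_prod_left
  calc ∫ t in Set.Icc (0 : ℝ) 1, ∫ ω, ‖u (X t ω) t‖ ∂μ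
      ≤ ∫ _t in Set.Icc (0 : ℝ) 1, C :=
        setIntegral_mono_on hg ((integrableOn_const_iff (C := C) (by finiteness)).mpr (Or.inr (by simp)))
          measurableSet_Icc hinner
    _ = C := by
        rw [setIntegral_const]
        simp [Real.volume_Icc]
end
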